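/- arXiv:1605.01322 — 4 statements merged into one kernel-verified Lean document; each statement's English description precedes it below -/
import Mathlib

section
/- For any pointed finite simplicial complex (K, v₀), scat K ≤ wscat K, where wscat is the simplicial Whitehead category. -/
/-- An abstract simplicial complex on a vertex type `V`:
a downward-closed family of nonempty finite sets of vertices. -/
structure AbsSC (V : Type) where
  faces : Set (Finset V)
  nonempty_of_mem : ∀ σ ∈ faces, σ.Nonempty
  down_closed : ∀ σ ∈ faces, ∀ τ : Finset V, τ ⊆ σ → τ.Nonempty → τ ∈ faces

namespace AbsSC

variable {V W V' W' : Type} [DecidableEq V] [DecidableEq W]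

/-- `f` is a simplicial map from `K` to `L`. -/
def IsSimplicial (K : AbsSC V) (L : AbsSC W) (f : V → W) : Prop :=
  ∀ σ ∈ K.faces, σ.image f ∈ L.faces

/-- Two simplicial maps are contiguous. -/
def Contig (K : AbsSC V) (L : AbsSC W) (f g : V → W) : Prop :=
  IsSimplicial K L f ∧ IsSimplicial K L g ∧
    ∀ σ ∈ K.faces, σ.image f ∪ σ.image g ∈ L.faces

/-- Two maps are in the same contiguity class: they are connected by a
finite chain of pairwise contiguous simplicial maps. -/
def ContigClass (K : AbsSC V) (L : AbsSC W) : (V → W) → (V → W) → Prop :=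
  Relation.ReflTransGen (Contig K L)

/-- `U` is a categorical subcomplex of `K`: the inclusion is in the
contiguity class of a constant map onto a vertex of `K`. -/
def Categorical (K U : AbsSC V) : Prop :=
  U.faces ⊆ K.faces ∧ ∃ v : V, {v} ∈ K.faces ∧ ContigClass U K id (fun _ => v)

/-- `K` is covered by `n+1` categorical subcomplexes. -/
def CatCover (K : AbsSC V) (n : ℕ) : Prop :=
  ∃ U : Fin (n + 1) → AbsSC V, (∀ i, Categorical K (U i)) ∧
    ∀ σ ∈ K.faces, ∃ i, σ ∈ (U i).faces

/-- The simplicial Lusternik–Schnirelmann category of `K`. -/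
noncomputable def scat (K : AbsSC V) : ℕ := sInf {n | CatCover K n}

/-- A maximal simplex of `K`. -/
def MaximalFace (K : AbsSC V) (σ : Finset V) : Prop :=
  σ ∈ K.faces ∧ ∀ τ ∈ K.faces, σ ⊆ τ → σ = τ

/-- The vertex `v` is dominated (by some other vertex `v'`). -/
def Dominated (K : AbsSC V) (v : V) : Prop :=
  ∃ v' : V, v' ≠ v ∧ {v} ∈ K.faces ∧ {v'} ∈ K.faces ∧
    ∀ σ : Finset V, MaximalFace K σ → v ∈ σ → v' ∈ σ

/-- A minimal complex: no vertex is dominated. -/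
def Minimal (K : AbsSC V) : Prop := ∀ v : V, ¬ Dominated K v

/-- Deleting (the open star of) a vertex. -/
def delete (K : AbsSC V) (v : V) : AbsSC V where
  faces := {σ ∈ K.faces | v ∉ σ}
  nonempty_of_mem := fun σ h => K.nonempty_of_mem σ h.1
  down_closed := fun σ h τ hτ hne =>
    ⟨K.down_closed σ h.1 τ hτ hne, fun hv => h.2 (hτ hv)⟩

/-- An elementary strong collapse: removal of the open star of a dominated vertex. -/
def ElemStrongCollapse (K L : AbsSC V) : Prop :=
  ∃ v : V, Dominated K v ∧ L = K.delete v

/-- A complex consisting of a single vertex. -/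
def IsPoint (K : AbsSC V) : Prop := ∃ v : V, K.faces = {{v}}

/-- `K` is strongly collapsible: it reduces to a single vertex by a
sequence of elementary strong collapses. -/
def StronglyCollapsible (K : AbsSC V) : Prop :=
  ∃ L : AbsSC V, Relation.ReflTransGen ElemStrongCollapse K L ∧ IsPoint L

/-- `K` is covered by `n+1` subcomplexes, each strongly collapsible in itself. -/
def GCatCover (K : AbsSC V) (n : ℕ) : Prop :=
  ∃ U : Fin (n + 1) → AbsSC V,
    (∀ i, (U i).faces ⊆ K.faces ∧ StronglyCollapsible (U i)) ∧
    ∀ σ ∈ K.faces, ∃ i, σ ∈ (U i).faces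

/-- The geometric simplicial category of `K`. -/
noncomputable def gscat (K : AbsSC V) : ℕ := sInf {n | GCatCover K n}

/-- Strong homotopy equivalence of complexes. -/
def StrongEquiv (K : AbsSC V) (L : AbsSC W) : Prop :=
  ∃ (φ : V → W) (ψ : W → V), IsSimplicial K L φ ∧ IsSimplicial L K ψ ∧
    ContigClass K K (ψ ∘ φ) id ∧ ContigClass L L (φ ∘ ψ) id

/-- The barycentric subdivision: vertices are the simplices of `K`,
simplices are the chains of simplices of `K`. -/
def sd (K : AbsSC V) : AbsSC (Finset V) where
  faces := {S | S.Nonempty ∧ (∀ σ ∈ S, σ ∈ K.faces) ∧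
    ∀ σ ∈ S, ∀ τ ∈ S, σ ⊆ τ ∨ τ ⊆ σ}
  nonempty_of_mem := fun S hS => hS.1
  down_closed := fun S hS T hTS hT =>
    ⟨hT, fun σ hσ => hS.2.1 σ (hTS hσ),
      fun σ hσ τ hτ => hS.2.2 σ (hTS hσ) τ (hTS hτ)⟩

/-- The categorical product of simplicial complexes. -/
def prod (K : AbsSC V) (L : AbsSC W) : AbsSC (V × W) where
  faces := {σ | σ.Nonempty ∧ σ.image Prod.fst ∈ K.faces ∧ σ.image Prod.snd ∈ L.faces}
  nonempty_of_mem := fun σ h => h.1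
  down_closed := fun σ h τ hτ hne =>
    ⟨hne, K.down_closed _ h.2.1 _ (Finset.image_subset_image hτ) (hne.image _),
      L.down_closed _ h.2.2 _ (Finset.image_subset_image hτ) (hne.image _)⟩

/-- The `n`-fold categorical power of `K`. -/
def power (K : AbsSC V) (n : ℕ) : AbsSC (Fin n → V) where
  faces := {σ | σ.Nonempty ∧ ∀ j : Fin n, σ.image (fun f => f j) ∈ K.faces}
  nonempty_of_mem := fun σ h => h.1
  down_closed := by
    intro σ h τ hτ hne
    exact ⟨hne, fun j => K.down_closed _ (h.2 j) _ (Finset.image_subset_image hτ) (hne.image _)⟩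

/-- The `n`-th fat wedge of a pointed complex `(K, v₀)` inside `Kⁿ`. -/
def fatWedge (K : AbsSC V) (n : ℕ) (v₀ : V) : AbsSC (Fin n → V) where
  faces := {σ | σ ∈ (K.power n).faces ∧ ∃ j : Fin n, ∀ f ∈ σ, f j = v₀}
  nonempty_of_mem := fun σ h => (K.power n).nonempty_of_mem σ h.1
  down_closed := fun σ h τ hτ hne =>
    ⟨(K.power n).down_closed σ h.1 τ hτ hne,
      h.2.imp fun j hj f hf => hj f (hτ hf)⟩

/-- The part of a set of vertices of a disjoint union lying in the left factor. -/
noncomputable def sumLeft (σ : Finset (V ⊕ W)) : Finset V :=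
  σ.preimage Sum.inl Sum.inl_injective.injOn

/-- The part of a set of vertices of a disjoint union lying in the right factor. -/
noncomputable def sumRight (σ : Finset (V ⊕ W)) : Finset W :=
  σ.preimage Sum.inr Sum.inr_injective.injOn

/-- The simplicial join `K ∗ L`. -/
def join (K : AbsSC V) (L : AbsSC W) : AbsSC (V ⊕ W) where
  faces := {σ | σ.Nonempty ∧ ((sumLeft σ).Nonempty → sumLeft σ ∈ K.faces) ∧
    ((sumRight σ).Nonempty → sumRight σ ∈ L.faces)}
  nonempty_of_mem := fun σ h => h.1
  down_closed := by
    intro σ h τ hτ hne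
    have hl : sumLeft τ ⊆ sumLeft σ := fun x hx => by
      rw [sumLeft, Finset.mem_preimage] at *; exact hτ hx
    have hr : sumRight τ ⊆ sumRight σ := fun x hx => by
      rw [sumRight, Finset.mem_preimage] at *; exact hτ hx
    exact ⟨hne,
      fun h1 => K.down_closed _ (h.2.1 (h1.mono hl)) _ hl h1,
      fun h1 => L.down_closed _ (h.2.2 (h1.mono hr)) _ hr h1⟩

/-- A graph: a simplicial complex of dimension at most 1. -/
def IsGraph (G : AbsSC V) : Prop := ∀ σ ∈ G.faces, σ.card ≤ 2

/-- A connected (nonempty) complex: any two vertices are joined by an edge path. -/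
def ConnectedG (G : AbsSC V) : Prop :=
  G.faces.Nonempty ∧
    ∀ u v : V, {u} ∈ G.faces → {v} ∈ G.faces →
      ∃ (n : ℕ) (p : Fin (n + 1) → V), p 0 = u ∧ p (Fin.last n) = v ∧
        ∀ i : Fin n, ({p i.castSucc, p i.succ} : Finset V) ∈ G.faces

/-- A cycle of length `n` in a graph: `n ≥ 3` distinct vertices joined cyclically by edges. -/
def IsCycle (G : AbsSC V) (n : ℕ) (p : ZMod n → V) : Prop :=
  3 ≤ n ∧ Function.Injective p ∧
    ∀ i : ZMod n, ({p i, p (i + 1)} : Finset V) ∈ G.faces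

/-- A forest: a graph containing no cycle. -/
def IsForest (G : AbsSC V) : Prop := ∀ (n : ℕ) (p : ZMod n → V), ¬ IsCycle G n p

/-- A tree: a connected forest. -/
def IsTree (G : AbsSC V) : Prop := IsForest G ∧ ConnectedG G

/-- A decomposition of a graph into `k` edge-disjoint spanning forests. -/
def EdgeDisjointForestDecomp (G : AbsSC V) (k : ℕ) : Prop :=
  ∃ F : Fin k → AbsSC V,
    (∀ i, (F i).faces ⊆ G.faces ∧ IsForest (F i) ∧
      ∀ v : V, {v} ∈ G.faces → {v} ∈ (F i).faces) ∧
    (∀ σ ∈ G.faces, ∃ i, σ ∈ (F i).faces) ∧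
    ∀ (i j : Fin k) (σ : Finset V), σ.card = 2 →
      σ ∈ (F i).faces → σ ∈ (F j).faces → i = j

/-- The arboricity of a graph. -/
noncomputable def arboricity (G : AbsSC V) : ℕ :=
  sInf {k | EdgeDisjointForestDecomp G k}

end AbsSC

namespace AbsSC

variable {V W : Type} [DecidableEq V] [DecidableEq W]

lemma Contig.symm' {K : AbsSC V} {L : AbsSC W} {f g : V → W}
    (h : Contig K L f g) : Contig K L g f :=
  ⟨h.2.1, h.1, fun σ hσ => by rw [Finset.union_comm]; exact h.2.2 σ hσ⟩

lemma ContigClass.symm' {K : AbsSC V} {L : AbsSC W} {f g : V → W}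
    (h : ContigClass K L f g) : ContigClass K L g f := by
  induction h with
  | refl => exact Relation.ReflTransGen.refl
  | tail hab hbc ih => exact Relation.ReflTransGen.head hbc.symm' ih

lemma contig_proj {K : AbsSC V} {n : ℕ} {f g : V → (Fin n → V)} (j : Fin n)
    (h : Contig K (K.power n) f g) :
    Contig K K (fun v => f v j) (fun v => g v j) := by
  obtain ⟨hf, hg, hfg⟩ := h
  refine ⟨fun σ hσ => ?_, fun σ hσ => ?_, fun σ hσ => ?_⟩
  · have := (hf σ hσ).2 j
    rwa [Finset.image_image] at this
  · have := (hg σ hσ).2 j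
    rwa [Finset.image_image] at this
  · have := (hfg σ hσ).2 j
    rwa [Finset.image_union, Finset.image_image, Finset.image_image] at this

lemma contigClass_proj {K : AbsSC V} {n : ℕ} {f g : V → (Fin n → V)} (j : Fin n)
    (h : ContigClass K (K.power n) f g) :
    ContigClass K K (fun v => f v j) (fun v => g v j) := by
  induction h with
  | refl => exact Relation.ReflTransGen.refl
  | tail _ hbc ih => exact ih.tail (contig_proj j hbc)

lemma contigClass_restrict {K U : AbsSC V} {L : AbsSC W} {f g : V → W}
    (hU : U.faces ⊆ K.faces) (h : ContigClass K L f g) :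
    ContigClass U L f g := by
  induction h with
  | refl => exact Relation.ReflTransGen.refl
  | tail _ hbc ih =>
      exact ih.tail ⟨fun σ hσ => hbc.1 σ (hU hσ), fun σ hσ => hbc.2.1 σ (hU hσ),
        fun σ hσ => hbc.2.2 σ (hU hσ)⟩

end AbsSC

/-- `scat K ≤ wscat K`: if the diagonal `Δ : K → K^{n+1}` factors
up to contiguity class through the fat wedge `T^{n+1}K`, then `scat K ≤ n`. -/
theorem scat_le_wscat {V : Type} [DecidableEq V] [Fintype V]
    (K : AbsSC V) (v₀ : V) (h₀ : ({v₀} : Finset V) ∈ K.faces)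
    (n : ℕ) (δ : V → (Fin (n + 1) → V))
    (hδ : AbsSC.IsSimplicial K (K.fatWedge (n + 1) v₀) δ)
    (h : AbsSC.ContigClass K (K.power (n + 1)) δ (fun v _ => v)) :
    AbsSC.scat K ≤ n := by
  classical
  have hcover : AbsSC.CatCover K n := by
    refine ⟨fun j => ⟨{σ ∈ K.faces | ∀ v ∈ σ, δ v j = v₀},
      fun σ hσ => K.nonempty_of_mem σ hσ.1,
      fun σ hσ τ hτ hne => ⟨K.down_closed σ hσ.1 τ hτ hne, fun v hv => hσ.2 v (hτ hv)⟩⟩,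
      fun j => ?_, fun σ hσ => ?_⟩
    · refine ⟨fun σ hσ => hσ.1, v₀, h₀, ?_⟩
      have h1 : AbsSC.ContigClass K K (fun v => δ v j) id :=
        AbsSC.contigClass_proj j h
      have hUsub : {σ ∈ K.faces | ∀ v ∈ σ, δ v j = v₀} ⊆ K.faces := fun σ hσ => hσ.1
      have h2 : AbsSC.ContigClass
          (⟨{σ ∈ K.faces | ∀ v ∈ σ, δ v j = v₀},
            fun σ hσ => K.nonempty_of_mem σ hσ.1,
            fun σ hσ τ hτ hne => ⟨K.down_closed σ hσ.1 τ hτ hne, fun v hv => hσ.2 v (hτ hv)⟩⟩ : AbsSC V)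
          K id (fun v => δ v j) :=
        AbsSC.contigClass_restrict hUsub h1.symm'
      refine h2.tail ?_
      have himg : ∀ σ : Finset V, σ ∈ K.faces → (∀ v ∈ σ, δ v j = v₀) →
          σ.image (fun v => δ v j) = {v₀} := by
        intro σ hσ hσ2
        apply Finset.eq_singleton_iff_nonempty_unique_mem.mpr
        refine ⟨(K.nonempty_of_mem σ hσ).image _, ?_⟩
        intro x hx
        obtain ⟨v, hv, rfl⟩ := Finset.mem_image.mp hx
        exact hσ2 v hv
      have hconst : ∀ σ : Finset V, (σ.image (fun _ : V => v₀)) ⊆ {v₀} := by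
        intro σ x hx
        obtain ⟨v, hv, rfl⟩ := Finset.mem_image.mp hx
        exact Finset.mem_singleton_self v₀
      refine ⟨fun σ hσ => ?_, fun σ hσ => ?_, fun σ hσ => ?_⟩
      · rw [himg σ hσ.1 hσ.2]; exact h₀
      · have : σ.image (fun _ : V => v₀) = {v₀} :=
          Finset.Nonempty.subset_singleton_iff ((K.nonempty_of_mem σ hσ.1).image _) |>.mp (hconst σ)
        rw [this]; exact h₀
      · have h3 : σ.image (fun _ : V => v₀) = {v₀} :=
          Finset.Nonempty.subset_singleton_iff ((K.nonempty_of_mem σ hσ.1).image _) |>.mp (hconst σ)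
        rw [himg σ hσ.1 hσ.2, h3, Finset.union_self]; exact h₀
    · obtain ⟨_, j, hj⟩ := hδ σ hσ
      refine ⟨j, hσ, fun v hv => hj (δ v) (Finset.mem_image_of_mem δ hv)⟩
  exact Nat.sInf_le hcover
end

section
/- Let K₀ be a minimal finite simplicial complex (no dominated vertices) and φ : K₀ → K₀ a simplicial map in the same contiguity class as the identity. Then φ is the identity. -/
/-- Every face of a finite complex is contained in a maximal face. -/
lemma exists_maximalFace {V : Type} [DecidableEq V] [Fintype V]
    (K : AbsSC V) {σ : Finset V} (hσ : σ ∈ K.faces) :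
    ∃ τ : Finset V, AbsSC.MaximalFace K τ ∧ σ ⊆ τ := by
  classical
  let S : Finset (Finset V) := Finset.univ.powerset.filter (fun τ => τ ∈ K.faces ∧ σ ⊆ τ)
  have hσS : σ ∈ S := by
    simp only [S, Finset.mem_filter, Finset.mem_powerset]
    exact ⟨Finset.subset_univ _, hσ, subset_rfl⟩
  obtain ⟨τ, hτS, hmax⟩ := S.exists_max_image Finset.card ⟨σ, hσS⟩
  simp only [S, Finset.mem_filter, Finset.mem_powerset] at hτS
  refine ⟨τ, ⟨hτS.2.1, fun τ' hτ' hsub => ?_⟩, hτS.2.2⟩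
  have hτ'S : τ' ∈ S := by
    simp only [S, Finset.mem_filter, Finset.mem_powerset]
    exact ⟨Finset.subset_univ _, hτ', hτS.2.2.trans hsub⟩
  exact Finset.eq_of_subset_of_card_le hsub (hmax τ' hτ'S)

/-- One contiguity step with a map acting as the identity forces identity. -/
lemma contig_id_step {V : Type} [DecidableEq V] [Fintype V]
    (K : AbsSC V) (hmin : AbsSC.Minimal K) (f g : V → V)
    (hc : AbsSC.Contig K K f g) (hg : ∀ v : V, ({v} : Finset V) ∈ K.faces → g v = v) :
    ∀ v : V, ({v} : Finset V) ∈ K.faces → f v = v := by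
  intro v hv
  by_contra hne
  -- {f v} is a face
  have hfv : ({f v} : Finset V) ∈ K.faces := by
    have := hc.1 {v} hv
    simpa using this
  apply hmin v
  refine ⟨f v, hne, hv, hfv, ?_⟩
  intro σ hσmax hvσ
  -- image of σ under g is σ
  have hvert : ∀ w ∈ σ, ({w} : Finset V) ∈ K.faces := fun w hw =>
    K.down_closed σ hσmax.1 {w} (Finset.singleton_subset_iff.2 hw) ⟨w, Finset.mem_singleton_self w⟩
  have hgσ : σ.image g = σ := by
    ext w
    simp only [Finset.mem_image]
    constructor
    · rintro ⟨x, hx, rfl⟩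
      rw [hg x (hvert x hx)]; exact hx
    · intro hw; exact ⟨w, hw, hg w (hvert w hw)⟩
  have hface : σ.image f ∪ σ ∈ K.faces := by
    have := hc.2.2 σ hσmax.1
    rwa [hgσ] at this
  have := hσmax.2 _ hface Finset.subset_union_right
  have hfsub : σ.image f ⊆ σ := by
    conv_rhs => rw [this]
    exact Finset.subset_union_left
  exact hfsub (Finset.mem_image_of_mem f hvσ)

/-- on a minimal complex, a simplicial map in the contiguity
class of the identity is the identity. -/
theorem minimal_contigClass_id {V : Type} [DecidableEq V] [Fintype V]
    (K : AbsSC V) (hmin : AbsSC.Minimal K) (φ : V → V)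
    (hφ : AbsSC.IsSimplicial K K φ) (h : AbsSC.ContigClass K K φ id) :
    ∀ v : V, ({v} : Finset V) ∈ K.faces → φ v = v := by
  clear hφ
  induction h using Relation.ReflTransGen.head_induction_on with
  | refl => intro v _; rfl
  | head hstep _ ih => exact contig_id_step K hmin _ _ hstep ih
end

section
/- Let K be a finite simplicial complex with wscat K ≤ 1. Then K is strongly collapsible, i.e., scat K = 0. -/
/-!
If `v` is dominated by `v'`, the map sending `v` to `v'` and fixing the other vertices is a
retraction onto `K.delete v` contiguous to the identity. Composing with it transports a
factorisation of the diagonal through the fat wedge from `K` to `K.delete v`, so the factorisation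
survives down to a minimal core `K₀`. On a minimal complex a map in the contiguity class of the
identity is the identity, so both coordinates of the factorisation fix every vertex `v`; then
`(v, v)` lies in the wedge, i.e. `v = v₀`, and `K₀` is a point. The same retractions show that
the identity of a strongly collapsible complex is in the contiguity class of a constant, so
`scat = 0`.
-/

namespace AbsSC

variable {V W X : Type} {K : AbsSC V} {L : AbsSC W} {M : AbsSC X}

lemma singleton_mem_faces {σ : Finset V} (hσ : σ ∈ K.faces) {u : V} (hu : u ∈ σ) :
    {u} ∈ K.faces :=
  K.down_closed σ hσ {u} (Finset.singleton_subset_iff.mpr hu) (Finset.singleton_nonempty u)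

lemma delete_faces_subset (K : AbsSC V) (v : V) : (K.delete v).faces ⊆ K.faces :=
  fun _ hσ => hσ.1

lemma delete_faces_ssubset {v : V} (hv : {v} ∈ K.faces) : (K.delete v).faces ⊂ K.faces :=
  Set.ssubset_iff_of_subset (K.delete_faces_subset v) |>.mpr
    ⟨{v}, hv, fun h => h.2 (Finset.mem_singleton_self v)⟩

lemma exists_maximalFace_superset [Fintype V] {σ : Finset V} (hσ : σ ∈ K.faces) :
    ∃ τ, MaximalFace K τ ∧ σ ⊆ τ := by
  classical
  obtain ⟨τ, hτ, hmax⟩ := Finset.exists_max_image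
    {τ | τ ∈ K.faces ∧ σ ⊆ τ} Finset.card ⟨σ, by simp [hσ]⟩
  simp only [Finset.mem_filter, Finset.mem_univ, true_and] at hτ hmax
  exact ⟨τ, ⟨hτ.1, fun ρ hρ hτρ =>
    Finset.eq_of_subset_of_card_le hτρ (hmax ρ ⟨hρ, hτ.2.trans hτρ⟩)⟩, hτ.2⟩

lemma exists_reflTransGen_elemStrongCollapse_minimal [Fintype V] (K : AbsSC V) :
    ∃ L, Relation.ReflTransGen ElemStrongCollapse K L ∧ Minimal L := by
  induction hn : K.faces.ncard using Nat.strong_induction_on generalizing K with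
  | _ n ih =>
  by_cases hK : Minimal K
  · exact ⟨K, .refl, hK⟩
  · obtain ⟨v, hv⟩ := not_forall_not.mp hK
    have hlt : (K.delete v).faces.ncard < n :=
      hn ▸ Set.ncard_lt_ncard (delete_faces_ssubset hv.choose_spec.2.1) (Set.toFinite _)
    obtain ⟨L, hKL, hL⟩ := ih _ hlt (K.delete v) rfl
    exact ⟨L, .head ⟨v, hv, rfl⟩ hKL, hL⟩

section Contiguity

variable [DecidableEq W] [DecidableEq X]

lemma IsSimplicial.comp {f : V → W} {g : W → X} (hg : IsSimplicial L M g)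
    (hf : IsSimplicial K L f) : IsSimplicial K M (g ∘ f) := fun σ hσ => by
  rw [← Finset.image_image]; exact hg _ (hf σ hσ)

lemma isSimplicial_const {w : W} (hw : {w} ∈ L.faces) :
    IsSimplicial K L (fun _ => w) := fun σ hσ => by
  rwa [Finset.image_const (K.nonempty_of_mem σ hσ)]

lemma contig_of_eqOn {f g : V → W} (hg : IsSimplicial K L g)
    (hfg : ∀ σ ∈ K.faces, ∀ u ∈ σ, f u = g u) : Contig K L f g := by
  have himage : ∀ σ ∈ K.faces, σ.image f = σ.image g := fun σ hσ =>
    Finset.image_congr (hfg σ hσ)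
  refine ⟨fun σ hσ => ?_, hg, fun σ hσ => ?_⟩
  · rw [himage σ hσ]; exact hg σ hσ
  · rw [himage σ hσ, Finset.union_self]; exact hg σ hσ

namespace ContigClass

variable {f g : V → W}

lemma postcomp {s : W → X} (hs : IsSimplicial L M s) (h : ContigClass K L f g) :
    ContigClass K M (s ∘ f) (s ∘ g) := by
  refine Relation.ReflTransGen.lift (s ∘ ·) (fun a b ⟨ha, hb, hab⟩ => ?_) _ _ h
  refine ⟨hs.comp ha, hs.comp hb, fun σ hσ => ?_⟩
  rw [← Finset.image_image, ← Finset.image_image, ← Finset.image_union]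
  exact hs _ (hab σ hσ)

lemma precomp {f g : W → X} {r : V → W} (hr : IsSimplicial K L r)
    (h : ContigClass L M f g) : ContigClass K M (f ∘ r) (g ∘ r) := by
  refine Relation.ReflTransGen.lift (· ∘ r) (fun a b ⟨ha, hb, hab⟩ => ?_) _ _ h
  refine ⟨ha.comp hr, hb.comp hr, fun σ hσ => ?_⟩
  rw [← Finset.image_image (g := a), ← Finset.image_image (g := b)]
  exact hab _ (hr σ hσ)

lemma restrict {K' : AbsSC V} (hK : K'.faces ⊆ K.faces) (h : ContigClass K L f g) :
    ContigClass K' L f g :=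
  Relation.ReflTransGen.mono (fun _ _ ⟨ha, hb, hab⟩ =>
    ⟨fun σ hσ => ha σ (hK hσ), fun σ hσ => hb σ (hK hσ), fun σ hσ => hab σ (hK hσ)⟩)
    _ _ h

lemma mono_target {L' : AbsSC W} (hL : L.faces ⊆ L'.faces) (h : ContigClass K L f g) :
    ContigClass K L' f g :=
  Relation.ReflTransGen.mono (fun _ _ ⟨ha, hb, hab⟩ =>
    ⟨fun σ hσ => hL (ha σ hσ), fun σ hσ => hL (hb σ hσ), fun σ hσ => hL (hab σ hσ)⟩)
    _ _ h

end ContigClass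

end Contiguity

variable [DecidableEq V] [DecidableEq W]

lemma isSimplicial_diag (K : AbsSC V) (n : ℕ) :
    IsSimplicial K (K.power n) (fun v _ => v) := fun σ hσ =>
  ⟨(K.nonempty_of_mem σ hσ).image _, fun j => by rwa [Finset.image_image, Function.comp_def,
    Finset.image_id']⟩

lemma isSimplicial_eval (K : AbsSC V) {n : ℕ} (j : Fin n) :
    IsSimplicial (K.power n) K (fun f => f j) := fun _ hσ => hσ.2 j

lemma image_comp_eval {n : ℕ} (s : V → W) (σ : Finset (Fin n → V)) (j : Fin n) :
    (σ.image (s ∘ ·)).image (fun f => f j) = (σ.image fun f => f j).image s := by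
  simp only [Finset.image_image]; rfl

lemma IsSimplicial.power {s : V → W} (hs : IsSimplicial K L s) (n : ℕ) :
    IsSimplicial (K.power n) (L.power n) (s ∘ ·) := fun σ hσ =>
  ⟨hσ.1.image _, fun j => by rw [image_comp_eval]; exact hs _ (hσ.2 j)⟩

lemma IsSimplicial.fatWedge {s : V → W} (hs : IsSimplicial K L s) (n : ℕ) (v₀ : V) :
    IsSimplicial (K.fatWedge n v₀) (L.fatWedge n (s v₀)) (s ∘ ·) := by
  rintro σ ⟨hσ, j, hj⟩
  refine ⟨hs.power n σ hσ, j, ?_⟩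
  simp only [Finset.mem_image]
  rintro _ ⟨f, hf, rfl⟩
  simp [hj f hf]

section Domination

variable [Fintype V] {v v' : V} (hdom : ∀ σ, MaximalFace K σ → v ∈ σ → v' ∈ σ)
include hdom

lemma union_image_update_mem {σ : Finset V} (hσ : σ ∈ K.faces) :
    σ ∪ σ.image (Function.update id v v') ∈ K.faces := by
  obtain ⟨τ, hτ, hστ⟩ := exists_maximalFace_superset hσ
  refine K.down_closed τ hτ.1 _ (Finset.union_subset hστ ?_)
    ((K.nonempty_of_mem σ hσ).mono Finset.subset_union_left)
  simp only [Finset.image_subset_iff, Function.update_apply, id]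
  intro u hu
  split_ifs with huv
  · exact hdom τ hτ (hστ (huv ▸ hu))
  · exact hστ hu

lemma isSimplicial_update_delete (hne : v' ≠ v) :
    IsSimplicial K (K.delete v) (Function.update id v v') := by
  intro σ hσ
  refine ⟨K.down_closed _ (union_image_update_mem hdom hσ) _ Finset.subset_union_right
    ((K.nonempty_of_mem σ hσ).image _), ?_⟩
  simp only [Finset.mem_image, Function.update_apply, id, not_exists, not_and]
  intro u _
  split_ifs with huv
  exacts [hne, huv]

lemma contig_id_update (hne : v' ≠ v) : Contig K K id (Function.update id v v') :=
  ⟨fun σ hσ => by rwa [Finset.image_id],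
    fun σ hσ => (isSimplicial_update_delete hdom hne σ hσ).1,
    fun σ hσ => by rw [Finset.image_id]; exact union_image_update_mem hdom hσ⟩

end Domination

lemma Minimal.eq_of_contigClass_id (hK : Minimal K) {f : V → V} (h : ContigClass K K f id)
    {v : V} (hv : {v} ∈ K.faces) : f v = v := by
  induction h using Relation.ReflTransGen.head_induction_on generalizing v with
  | refl => rfl
  | @head a c hac _ ih =>
    by_contra hne
    obtain ⟨ha, -, hunion⟩ := hac
    -- `c` fixes every vertex, so `σ ∪ a(σ)` is a face; maximality of `σ` puts `a v` in `σ`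
    refine hK v ⟨a v, hne, hv, by simpa using ha _ hv, fun σ hσ hvσ => ?_⟩
    have hcσ : σ.image c = σ := by
      rw [Finset.image_congr fun u hu => ih (singleton_mem_faces hσ.1 hu), Finset.image_id']
    have hmax := hσ.2 _ (hcσ ▸ hunion σ hσ.1) Finset.subset_union_right
    exact hmax ▸ Finset.mem_union_left _ (Finset.mem_image_of_mem a hvσ)

/-- `wscat K ≤ n`, stated with the fat wedge in `Kⁿ⁺¹`. -/
def WscatLE (K : AbsSC V) (n : ℕ) : Prop :=
  ∃ v₀, {v₀} ∈ K.faces ∧ ∃ δ : V → Fin (n + 1) → V,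
    IsSimplicial K (K.fatWedge (n + 1) v₀) δ ∧
      ContigClass K (K.power (n + 1)) δ (fun v _ => v)

lemma WscatLE.of_elemStrongCollapse [Fintype V] {K L : AbsSC V} {n : ℕ} (h : K.WscatLE n)
    (hKL : ElemStrongCollapse K L) : L.WscatLE n := by
  obtain ⟨v, ⟨v', hne, -, -, hdom⟩, rfl⟩ := hKL
  obtain ⟨v₀, h₀, δ, hδ, hdiag⟩ := h
  set r := Function.update id v v'
  have hr := isSimplicial_update_delete hdom hne
  refine ⟨r v₀, by simpa using hr _ h₀, (r ∘ ·) ∘ δ,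
    fun σ hσ => (hr.fatWedge _ v₀).comp hδ σ (K.delete_faces_subset v hσ), ?_⟩
  refine (hdiag.restrict (K.delete_faces_subset v)).postcomp (hr.power _) |>.tail <|
    contig_of_eqOn (isSimplicial_diag _ _) fun σ hσ u hu => ?_
  have huv : u ≠ v := fun h => hσ.2 (h ▸ hu)
  funext j
  exact Function.update_of_ne huv _ _

lemma WscatLE.of_reflTransGen [Fintype V] {K L : AbsSC V} {n : ℕ} (h : K.WscatLE n)
    (hKL : Relation.ReflTransGen ElemStrongCollapse K L) : L.WscatLE n := by
  induction hKL with
  | refl => exact h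
  | tail _ hst ih => exact ih.of_elemStrongCollapse hst

lemma Minimal.isPoint_of_wscatLE (hK : Minimal K) {n : ℕ} (h : K.WscatLE n) : IsPoint K := by
  obtain ⟨v₀, h₀, δ, hδ, hdiag⟩ := h
  have hvertex : ∀ v, {v} ∈ K.faces → v = v₀ := by
    intro v hv
    obtain ⟨-, j, hj⟩ := hδ _ hv
    have hδv : δ v j = v :=
      hK.eq_of_contigClass_id (hdiag.postcomp (isSimplicial_eval K j)) hv
    simpa [hδv] using hj
  refine ⟨v₀, Set.ext fun σ => ⟨fun hσ => ?_, fun hσ => hσ ▸ h₀⟩⟩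
  exact Finset.eq_singleton_iff_nonempty_unique_mem.mpr
    ⟨K.nonempty_of_mem σ hσ, fun u hu => hvertex u (singleton_mem_faces hσ hu)⟩

lemma WscatLE.stronglyCollapsible [Fintype V] {n : ℕ} (h : K.WscatLE n) : StronglyCollapsible K :=
  have ⟨L, hKL, hL⟩ := K.exists_reflTransGen_elemStrongCollapse_minimal
  ⟨L, hKL, hL.isPoint_of_wscatLE (h.of_reflTransGen hKL)⟩

lemma StronglyCollapsible.exists_contigClass_id_const [Fintype V] (h : StronglyCollapsible K) :
    ∃ w, {w} ∈ K.faces ∧ ContigClass K K id (fun _ => w) := by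
  obtain ⟨M, hKM, w, hM⟩ := h
  induction hKM using Relation.ReflTransGen.head_induction_on with
  | refl =>
    refine ⟨w, hM ▸ rfl, .single <| contig_of_eqOn (isSimplicial_const (hM ▸ rfl)) ?_⟩
    intro σ hσ u hu
    rw [hM, Set.mem_singleton_iff] at hσ
    exact Finset.mem_singleton.mp (hσ ▸ hu)
  | @head K L hKL _ ih =>
    obtain ⟨v, ⟨v', hne, -, -, hdom⟩, rfl⟩ := hKL
    obtain ⟨w, hw, hid⟩ := ih
    -- with `r := update id v v'`: `id ∼ r`, and `r ∼ const ∘ r` by pulling back along `r`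
    -- the contiguity class of `id` on `K.delete v`
    exact ⟨w, hw.1, .head (contig_id_update hdom hne)
      ((hid.mono_target (K.delete_faces_subset v)).precomp (isSimplicial_update_delete hdom hne))⟩

lemma StronglyCollapsible.scat_eq_zero [Fintype V] (h : StronglyCollapsible K) : scat K = 0 :=
  have ⟨w, hw, hid⟩ := h.exists_contigClass_id_const
  Nat.sInf_eq_zero.mpr <| .inl
    ⟨fun _ => K, fun _ => ⟨subset_rfl, w, hw, hid⟩, fun _ hσ => ⟨0, hσ⟩⟩

end AbsSC

/-- if `wscat K ≤ 1`, i.e. the diagonal `Δ : K → K²` factors up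
to contiguity class through the wedge `T²K`, then `K` is strongly collapsible
(equivalently `scat K = 0`). -/
theorem stronglyCollapsible_of_wscat_le_one {V : Type} [DecidableEq V] [Fintype V]
    (K : AbsSC V) (v₀ : V) (h₀ : ({v₀} : Finset V) ∈ K.faces)
    (δ : V → (Fin 2 → V))
    (hδ : AbsSC.IsSimplicial K (K.fatWedge 2 v₀) δ)
    (h : AbsSC.ContigClass K (K.power 2) δ (fun v _ => v)) :
    AbsSC.StronglyCollapsible K ∧ AbsSC.scat K = 0 := by
  have hK : K.WscatLE 1 := ⟨v₀, h₀, δ, hδ, h⟩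
  have hSC := hK.stronglyCollapsible
  exact ⟨hSC, hSC.scat_eq_zero⟩
end

section
/- Let G be a connected graph and L ⊆ G a subgraph. Then L is categorical in G if and only if L is a forest (contains no cycle). -/
section Aux

open Finset

variable {V : Type} [DecidableEq V]

theorem forest_of_categorical_aux (G L : AbsSC V)
    (hG : AbsSC.IsGraph G) (_hL : L.faces ⊆ G.faces)
    (h : AbsSC.Categorical G L) : AbsSC.IsForest L := by
  rintro n p ⟨hn, hinj, hedge⟩
  haveI : NeZero n := ⟨by omega⟩
  have hdvd : ∀ m : ℕ, ((m : ZMod n) = 0) → n ∣ m := by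
    intro m hm; exact (ZMod.natCast_eq_zero_iff m n).1 hm
  have h01 : p 0 ≠ p 1 := by
    intro e
    have h0 : (0 : ZMod n) = 1 := hinj e
    have h1 : ((1 : ℕ) : ZMod n) = 0 := by exact_mod_cast h0.symm
    have := Nat.le_of_dvd one_pos (hdvd 1 h1)
    omega
  set δ : V → V → ℤ := fun a b =>
    (if a = p 0 ∧ b = p 1 then 1 else 0) - (if a = p 1 ∧ b = p 0 then 1 else 0) with hδ
  have hanti : ∀ u v, δ u v + δ v u = 0 := by
    intro u v
    simp only [hδ, and_comm]
    ring
  have hδzero : ∀ (T : Finset V), T.card ≤ 2 → ∀ a b c d, a ∈ T → b ∈ T → c ∈ T → d ∈ T →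
      δ a b + δ b c + δ c d + δ d a = 0 := by
    intro T hT a b c d ha hb hc hd
    by_cases h0 : p 0 ∈ T ∧ p 1 ∈ T
    · have hsub : ({p 0, p 1} : Finset V) ⊆ T := by
        intro x hx
        rcases Finset.mem_insert.1 hx with rfl | hx
        · exact h0.1
        · rw [Finset.mem_singleton] at hx; subst hx; exact h0.2
      have hcard2 : ({p 0, p 1} : Finset V).card = 2 := Finset.card_pair h01
      have hTeq : T = ({p 0, p 1} : Finset V) :=
        (Finset.eq_of_subset_of_card_le hsub (by omega)).symm
      have key : ∀ u v, u ∈ T → v ∈ T →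
          δ u v = (if v = p 1 then (1:ℤ) else 0) - (if u = p 1 then 1 else 0) := by
        intro u v hu hv
        rw [hTeq] at hu hv
        simp only [Finset.mem_insert, Finset.mem_singleton] at hu hv
        rcases hu with rfl | rfl <;> rcases hv with rfl | rfl <;>
          simp [hδ, h01, h01.symm]
      rw [key a b ha hb, key b c hb hc, key c d hc hd, key d a hd ha]
      ring
    · have key : ∀ u v, u ∈ T → v ∈ T → δ u v = 0 := by
        intro u v hu hv
        simp only [hδ]
        rw [if_neg, if_neg]
        · simp
        · rintro ⟨rfl, rfl⟩; exact h0 ⟨hv, hu⟩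
        · rintro ⟨rfl, rfl⟩; exact h0 ⟨hu, hv⟩
      rw [key a b ha hb, key b c hb hc, key c d hc hd, key d a hd ha]
      ring
  set W : (V → V) → ℤ := fun f => ∑ i : ZMod n, δ (f (p i)) (f (p (i+1))) with hW
  have hinv : ∀ f g : V → V, AbsSC.Contig L G f g → W f = W g := by
    rintro f g ⟨hf, hg, hfg⟩
    have key : ∀ i : ZMod n, δ (f (p i)) (f (p (i+1))) =
        δ (g (p i)) (g (p (i+1))) + (δ (f (p i)) (g (p i)) - δ (f (p (i+1))) (g (p (i+1)))) := by
      intro i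
      have hσ : ({p i, p (i+1)} : Finset V) ∈ L.faces := hedge i
      have hT : ({p i, p (i+1)} : Finset V).image f ∪ ({p i, p (i+1)} : Finset V).image g
          ∈ G.faces := hfg _ hσ
      have hcard := hG _ hT
      set T : Finset V := ({p i, p (i+1)} : Finset V).image f ∪ ({p i, p (i+1)} : Finset V).image g with hTdef
      have hm1 : f (p i) ∈ T := Finset.mem_union_left _
        (Finset.mem_image_of_mem f (Finset.mem_insert_self _ _))
      have hm2 : f (p (i+1)) ∈ T := Finset.mem_union_left _
        (Finset.mem_image_of_mem f (Finset.mem_insert_of_mem (Finset.mem_singleton_self _)))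
      have hm3 : g (p (i+1)) ∈ T := Finset.mem_union_right _
        (Finset.mem_image_of_mem g (Finset.mem_insert_of_mem (Finset.mem_singleton_self _)))
      have hm4 : g (p i) ∈ T := Finset.mem_union_right _
        (Finset.mem_image_of_mem g (Finset.mem_insert_self _ _))
      have quad := hδzero _ hcard (f (p i)) (f (p (i+1))) (g (p (i+1))) (g (p i))
        hm1 hm2 hm3 hm4
      have a1 := hanti (f (p (i+1))) (g (p (i+1)))
      have a2 := hanti (g (p (i+1))) (g (p i))
      have a3 := hanti (g (p i)) (f (p i))
      linarith
    have reindex : ∑ i : ZMod n, δ (f (p (i+1))) (g (p (i+1))) = ∑ i : ZMod n, δ (f (p i)) (g (p i)) :=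
      Fintype.sum_equiv (Equiv.addRight 1) _ _ (fun i => rfl)
    simp only [hW]
    rw [Finset.sum_congr rfl (fun i _ => key i), Finset.sum_add_distrib]
    have hz : ∑ i : ZMod n, (δ (f (p i)) (g (p i)) - δ (f (p (i+1))) (g (p (i+1)))) = 0 := by
      rw [Finset.sum_sub_distrib, reindex, sub_self]
    rw [hz, add_zero]
  have hchain : ∀ f g : V → V, AbsSC.ContigClass L G f g → W f = W g := by
    intro f g hc
    induction hc with
    | refl => rfl
    | tail _ hstep ih => exact ih.trans (hinv _ _ hstep)
  obtain ⟨_, v, _hv, hcc⟩ := h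
  have heq : W id = W (fun _ => v) := hchain _ _ hcc
  have hWid : W id = 1 := by
    have key : ∀ i : ZMod n, δ (p i) (p (i+1)) = if i = 0 then 1 else 0 := by
      intro i
      simp only [hδ]
      have c2 : ¬ (p i = p 1 ∧ p (i+1) = p 0) := by
        rintro ⟨e1, e2⟩
        have : i = 1 := hinj e1
        subst this
        have : (1 : ZMod n) + 1 = 0 := hinj e2
        have h2 : ((2 : ℕ) : ZMod n) = 0 := by push_cast; linear_combination this
        have := Nat.le_of_dvd two_pos (hdvd 2 h2)
        omega
      rw [if_neg c2]
      by_cases hi : i = 0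
      · subst hi
        rw [if_pos ⟨rfl, by rw [zero_add]⟩, if_pos rfl]
        ring
      · rw [if_neg, if_neg hi]; · ring
        rintro ⟨e1, _⟩; exact hi (hinj e1)
    simp only [hW, id_eq]
    rw [Finset.sum_congr rfl (fun i _ => key i)]
    simp
  have hWc : W (fun _ => v) = 0 := by
    simp only [hW]
    have : ∀ u : V, δ u u = 0 := by
      intro u; simp only [hδ]
      rw [if_neg, if_neg]
      · simp
      · rintro ⟨rfl, e⟩; exact h01 e.symm
      · rintro ⟨rfl, e⟩; exact h01 e
    simp [this]
  rw [hWid, hWc] at heq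
  exact one_ne_zero heq


theorem contig_comp {K K' G : AbsSC V} {r : V → V} (hr : AbsSC.IsSimplicial K K' r)
    {f g : V → V} (h : AbsSC.Contig K' G f g) : AbsSC.Contig K G (f ∘ r) (g ∘ r) := by
  obtain ⟨hf, hg, hfg⟩ := h
  refine ⟨fun σ hσ => ?_, fun σ hσ => ?_, fun σ hσ => ?_⟩
  · rw [show σ.image (f ∘ r) = (σ.image r).image f from (Finset.image_image).symm]
    exact hf _ (hr σ hσ)
  · rw [show σ.image (g ∘ r) = (σ.image r).image g from (Finset.image_image).symm]
    exact hg _ (hr σ hσ)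
  · rw [show σ.image (f ∘ r) = (σ.image r).image f from (Finset.image_image).symm,
      show σ.image (g ∘ r) = (σ.image r).image g from (Finset.image_image).symm]
    exact hfg _ (hr σ hσ)

theorem contigClass_comp {K K' G : AbsSC V} {r : V → V} (hr : AbsSC.IsSimplicial K K' r)
    {f g : V → V} (h : AbsSC.ContigClass K' G f g) :
    AbsSC.ContigClass K G (f ∘ r) (g ∘ r) := by
  induction h with
  | refl => exact Relation.ReflTransGen.refl
  | tail _ hstep ih => exact ih.tail (contig_comp hr hstep)

/-- Moving a single vertex along a path in `G`, when `L` has only singleton faces. -/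
theorem move_along_path {G L : AbsSC V}
    (hsing : ∀ σ ∈ L.faces, ∃ z, σ = {z})
    (f : V → V) (hf : AbsSC.IsSimplicial L G f) (u : V) :
    ∀ (n : ℕ) (p : Fin (n+1) → V), p 0 = f u →
    (∀ i : Fin n, ({p i.castSucc, p i.succ} : Finset V) ∈ G.faces) →
    (∀ i, ({p i} : Finset V) ∈ G.faces) →
    AbsSC.ContigClass L G f (fun x => if x = u then p (Fin.last n) else f x) := by
  intro n
  induction n with
  | zero =>
    intro p hp0 _ _
    have : (fun x => if x = u then p (Fin.last 0) else f x) = f := by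
      funext x
      by_cases hx : x = u
      · subst hx; rw [if_pos rfl, show (Fin.last 0) = 0 from rfl, hp0]
      · rw [if_neg hx]
    rw [this]
    exact Relation.ReflTransGen.refl
  | succ n ih =>
    intro p hp0 hedges hsingp
    have hq := ih (fun j => p j.castSucc) (by simpa using hp0)
      (fun i => by
        have := hedges i.castSucc
        rwa [Fin.succ_castSucc] at this)
      (fun i => hsingp i.castSucc)
    refine hq.tail ?_
    set g : V → V := fun x => if x = u then p (Fin.last n).castSucc else f x with hg
    set g' : V → V := fun x => if x = u then p (Fin.last (n+1)) else f x with hg'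
    have hedge : ({p (Fin.last n).castSucc, p (Fin.last (n+1))} : Finset V) ∈ G.faces := by
      have := hedges (Fin.last n)
      rwa [Fin.succ_last] at this
    have hgs : AbsSC.IsSimplicial L G g := by
      intro σ hσ
      obtain ⟨z, rfl⟩ := hsing σ hσ
      rw [Finset.image_singleton]
      by_cases hz : z = u
      · subst hz; rw [hg]; simp only [if_pos rfl]; exact hsingp _
      · rw [hg]; simp only [if_neg hz]
        have := hf _ hσ
        rwa [Finset.image_singleton] at this
    have hg's : AbsSC.IsSimplicial L G g' := by
      intro σ hσ
      obtain ⟨z, rfl⟩ := hsing σ hσ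
      rw [Finset.image_singleton]
      by_cases hz : z = u
      · subst hz; rw [hg']; simp only [if_pos rfl]; exact hsingp _
      · rw [hg']; simp only [if_neg hz]
        have := hf _ hσ
        rwa [Finset.image_singleton] at this
    refine ⟨hgs, hg's, fun σ hσ => ?_⟩
    obtain ⟨z, rfl⟩ := hsing σ hσ
    rw [Finset.image_singleton, Finset.image_singleton]
    by_cases hz : z = u
    · subst hz
      rw [hg, hg']; simp only [if_pos rfl]
      exact hedge
    · rw [hg, hg']; simp only [if_neg hz, Finset.union_idempotent]
      have := hf _ hσ
      rwa [Finset.image_singleton] at this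

/-- All vertices of an edgeless `L` can be contracted to a common vertex of `G`. -/
theorem singletons_to_const {G L : AbsSC V} [Fintype V]
    (hconn : AbsSC.ConnectedG G) (hL : L.faces ⊆ G.faces)
    (hsing : ∀ σ ∈ L.faces, ∃ z, σ = {z}) :
    ∃ v : V, ({v} : Finset V) ∈ G.faces ∧ AbsSC.ContigClass L G id (fun _ => v) := by
  classical
  obtain ⟨σ₀, hσ₀⟩ := hconn.1
  obtain ⟨v, hv⟩ := G.nonempty_of_mem σ₀ hσ₀
  have hvG : ({v} : Finset V) ∈ G.faces :=
    G.down_closed σ₀ hσ₀ {v} (Finset.singleton_subset_iff.2 hv) ⟨v, Finset.mem_singleton_self v⟩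
  refine ⟨v, hvG, ?_⟩
  have main : ∀ S : Finset V, (∀ x ∈ S, ({x} : Finset V) ∈ L.faces) →
      AbsSC.ContigClass L G id (fun x => if x ∈ S then v else x) := by
    intro S
    induction S using Finset.induction_on with
    | empty =>
      intro _
      have : (fun x => if x ∈ (∅ : Finset V) then v else x) = id := by
        funext x; simp
      rw [this]
      exact Relation.ReflTransGen.refl
    | @insert a S ha ih =>
      intro hmem
      have hSL : ∀ x ∈ S, ({x} : Finset V) ∈ L.faces := fun x hx =>
        hmem x (Finset.mem_insert_of_mem hx)
      have haL : ({a} : Finset V) ∈ L.faces := hmem a (Finset.mem_insert_self a S)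
      have cc := ih hSL
      set fS : V → V := fun x => if x ∈ S then v else x with hfS
      have hfSs : AbsSC.IsSimplicial L G fS := by
        intro σ hσ
        obtain ⟨z, rfl⟩ := hsing σ hσ
        rw [Finset.image_singleton, hfS]
        by_cases hz : z ∈ S
        · simp only [if_pos hz]; exact hvG
        · simp only [if_neg hz]; exact hL hσ
      obtain ⟨m, p, hp0, hplast, hpedges⟩ := hconn.2 a v (hL haL) hvG
      have hpsing : ∀ i, ({p i} : Finset V) ∈ G.faces := by
        intro i
        induction i using Fin.cases with
        | zero => rw [hp0]; exact hL haL
        | succ j =>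
          exact G.down_closed _ (hpedges j) _
            (Finset.singleton_subset_iff.2 (Finset.mem_insert_of_mem (Finset.mem_singleton_self _)))
            ⟨_, Finset.mem_singleton_self _⟩
      have hmove := move_along_path hsing fS hfSs a m p
        (by rw [hp0, hfS]; simp [ha]) hpedges hpsing
      have hfinal : (fun x => if x = a then p (Fin.last m) else fS x)
          = (fun x => if x ∈ insert a S then v else x) := by
        funext x
        by_cases hx : x = a
        · subst hx
          rw [if_pos rfl, if_pos (Finset.mem_insert_self _ _), hplast]
        · rw [if_neg hx]
          simp only [hfS]
          by_cases hx2 : x ∈ S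
          · rw [if_pos hx2, if_pos (Finset.mem_insert_of_mem hx2)]
          · rw [if_neg hx2, if_neg (by simp [hx, hx2])]
      rw [hfinal] at hmove
      exact cc.trans hmove
  have hfinalstep : AbsSC.Contig L G
      (fun x => if ({x} : Finset V) ∈ L.faces then v else x) (fun _ => v) := by
    have hs1 : AbsSC.IsSimplicial L G (fun x => if ({x} : Finset V) ∈ L.faces then v else x) := by
      intro σ hσ
      obtain ⟨z, rfl⟩ := hsing σ hσ
      rw [Finset.image_singleton]
      have hz : ({z} : Finset V) ∈ L.faces := hσ
      simp only [if_pos hz]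
      exact hvG
    have hs2 : AbsSC.IsSimplicial L G (fun _ : V => v) := by
      intro σ hσ
      obtain ⟨z, rfl⟩ := hsing σ hσ
      rw [Finset.image_singleton]
      exact hvG
    refine ⟨hs1, hs2, fun σ hσ => ?_⟩
    obtain ⟨z, rfl⟩ := hsing σ hσ
    have hz : ({z} : Finset V) ∈ L.faces := hσ
    rw [Finset.image_singleton, Finset.image_singleton]
    simp only [if_pos hz, Finset.union_idempotent]
    exact hvG
  have hmain := main (Finset.univ.filter (fun x => ({x} : Finset V) ∈ L.faces))
    (fun x hx => (Finset.mem_filter.1 hx).2)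
  have : (fun x => if x ∈ Finset.univ.filter (fun x => ({x} : Finset V) ∈ L.faces) then v else x)
      = (fun x => if ({x} : Finset V) ∈ L.faces then v else x) := by
    funext x; simp [Finset.mem_filter]
  rw [this] at hmain
  exact hmain.tail hfinalstep


/-- A finite forest with an edge has a leaf: a vertex contained in exactly one edge. -/
theorem exists_leaf {L : AbsSC V} [Fintype V]
    (hgr : ∀ σ ∈ L.faces, σ.card ≤ 2) (hforest : AbsSC.IsForest L)
    {e : Finset V} (he : e ∈ L.faces) (hcard : e.card = 2) :
    ∃ a b : V, a ≠ b ∧ ({a, b} : Finset V) ∈ L.faces ∧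
      ∀ σ ∈ L.faces, a ∈ σ → σ ⊆ {a, b} := by
  classical
  set P : Set ℕ := {k | ∃ p : ℕ → V,
    (∀ i ≤ k, ∀ j ≤ k, p i = p j → i = j) ∧
    ∀ i < k, ({p i, p (i+1)} : Finset V) ∈ L.faces} with hP
  obtain ⟨a₀, b₀, hab₀, rfl⟩ := Finset.card_eq_two.1 hcard
  have h1P : 1 ∈ P := by
    refine ⟨fun i => if i = 0 then a₀ else b₀, ?_, ?_⟩
    · intro i hi j hj hij
      interval_cases i <;> interval_cases j <;> simp_all
    · intro i hi
      interval_cases i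
      simpa using he
  have hbdd : ∀ k ∈ P, k + 1 ≤ Fintype.card V := by
    rintro k ⟨p, hpinj, -⟩
    have : ((Finset.range (k+1)).image p).card = k + 1 := by
      rw [Finset.card_image_of_injOn, Finset.card_range]
      intro i hi j hj hij
      exact hpinj i (by simpa using Nat.lt_succ_iff.1 (Finset.mem_range.1 hi))
        j (by simpa using Nat.lt_succ_iff.1 (Finset.mem_range.1 hj)) hij
    calc k + 1 = ((Finset.range (k+1)).image p).card := this.symm
      _ ≤ Fintype.card V := Finset.card_le_univ _
  have hbdd' : BddAbove P := ⟨Fintype.card V, fun k hk => le_trans (Nat.le_succ k) (hbdd k hk)⟩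
  set k : ℕ := sSup P with hk
  have hkP : k ∈ P := Nat.sSup_mem ⟨1, h1P⟩ hbdd'
  have hk1 : 1 ≤ k := le_csSup hbdd' h1P
  obtain ⟨p, hpinj, hpedge⟩ := hkP
  refine ⟨p k, p (k-1), ?_, ?_, ?_⟩
  · intro hkk
    have := hpinj k le_rfl (k-1) (by omega) hkk
    omega
  · have := hpedge (k-1) (by omega)
    rw [show k - 1 + 1 = k by omega] at this
    rwa [Finset.pair_comm]
  · intro σ hσ hpkσ
    by_contra hns
    obtain ⟨w, hwσ, hwab⟩ := Finset.not_subset.1 hns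
    simp only [Finset.mem_insert, Finset.mem_singleton, not_or] at hwab
    obtain ⟨hwa, hwb⟩ := hwab
    have hσeq : σ = {p k, w} := by
      refine (Finset.eq_of_subset_of_card_le ?_ ?_).symm
      · intro x hx
        rcases Finset.mem_insert.1 hx with rfl | hx
        · exact hpkσ
        · rw [Finset.mem_singleton] at hx; subst hx; exact hwσ
      · rw [Finset.card_pair (fun h => hwa h.symm)]
        exact hgr σ hσ
    by_cases hrange : ∃ j ≤ k, w = p j
    · obtain ⟨j, hjk, rfl⟩ := hrange
      have hjne : j ≠ k := fun h => hwa (by rw [h])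
      have hjne' : j ≠ k - 1 := fun h => hwb (by rw [h])
      have hjlt : j + 2 ≤ k := by omega
      set m : ℕ := k - j + 1 with hm
      have hm3 : 3 ≤ m := by omega
      haveI : NeZero m := ⟨by omega⟩
      haveI : Fact (1 < m) := ⟨by omega⟩
      have hmval : ∀ i : ZMod m, (i : ZMod m).val < m := fun i => ZMod.val_lt i
      set c : ZMod m → V := fun i => p (j + i.val) with hc
      have hinjc : Function.Injective c := by
        intro i i' hii
        have h1 : j + i.val ≤ k := by have := hmval i; omega
        have h2 : j + i'.val ≤ k := by have := hmval i'; omega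
        have := hpinj _ h1 _ h2 hii
        exact ZMod.val_injective m (by omega)
      have hedgec : ∀ i : ZMod m, ({c i, c (i+1)} : Finset V) ∈ L.faces := by
        intro i
        have hval : (i + 1).val = (i.val + 1) % m := by
          rw [ZMod.val_add, ZMod.val_one]
        by_cases hlast : i.val = m - 1
        · have h0 : (i + 1).val = 0 := by
            rw [hval, show i.val + 1 = m by omega, Nat.mod_self]
          have hsum : j + i.val = k := by omega
          have hCeq : ({c i, c (i+1)} : Finset V) = σ := by
            rw [hσeq]
            simp only [hc, h0, Nat.add_zero, hsum]
          rw [hCeq]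
          exact hσ
        · have hlt : i.val + 1 < m := by have := hmval i; omega
          have h0 : (i + 1).val = i.val + 1 := by rw [hval, Nat.mod_eq_of_lt hlt]
          have hCeq : ({c i, c (i+1)} : Finset V) = {p (j + i.val), p ((j + i.val) + 1)} := by
            simp only [hc, h0, ← Nat.add_assoc]
          rw [hCeq]
          exact hpedge (j + i.val) (by omega)
      exact hforest m c ⟨hm3, hinjc, hedgec⟩
    · push_neg at hrange
      have hknew : k + 1 ∈ P := by
        refine ⟨fun i => if i ≤ k then p i else w, ?_, ?_⟩
        · intro i hi j' hj' hij
          by_cases h1 : i ≤ k <;> by_cases h2 : j' ≤ k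
          · simp only [if_pos h1, if_pos h2] at hij; exact hpinj i h1 j' h2 hij
          · simp only [if_pos h1, if_neg h2] at hij
            exact absurd hij.symm (hrange i h1)
          · simp only [if_neg h1, if_pos h2] at hij
            exact absurd hij (hrange j' h2)
          · omega
        · intro i hi
          by_cases h1 : i < k
          · simp only [if_pos (by omega : i ≤ k), if_pos (by omega : i + 1 ≤ k)]
            exact hpedge i h1
          · have : i = k := by omega
            subst this
            simp only [if_pos le_rfl, if_neg (by omega : ¬ k + 1 ≤ k)]
            rw [← hσeq]
            exact hσ
      have := le_csSup hbdd' hknew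
      omega


theorem forest_contract {G : AbsSC V} [Fintype V]
    (hG : AbsSC.IsGraph G) (hconn : AbsSC.ConnectedG G) :
    ∀ N : ℕ, ∀ L : AbsSC V, {σ : Finset V | σ ∈ L.faces ∧ σ.card = 2}.ncard ≤ N →
      L.faces ⊆ G.faces → AbsSC.IsForest L →
      ∃ v : V, ({v} : Finset V) ∈ G.faces ∧ AbsSC.ContigClass L G id (fun _ => v) := by
  classical
  intro N
  induction N with
  | zero =>
    intro L hcard hL _
    have hnoedge : ¬ ∃ e ∈ L.faces, e.card = 2 := by
      rintro ⟨e, heL, hec⟩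
      have : {σ : Finset V | σ ∈ L.faces ∧ σ.card = 2}.Nonempty := ⟨e, heL, hec⟩
      have := Set.ncard_pos (Set.toFinite _) |>.2 this
      omega
    have hsing : ∀ σ ∈ L.faces, ∃ z, σ = {z} := by
      intro σ hσ
      have h1 : σ.card ≤ 2 := hG σ (hL hσ)
      have h2 : σ.card ≠ 2 := fun h => hnoedge ⟨σ, hσ, h⟩
      have h3 : 1 ≤ σ.card := Finset.card_pos.2 (L.nonempty_of_mem σ hσ)
      exact Finset.card_eq_one.1 (by omega)
    exact singletons_to_const hconn hL hsing
  | succ N ih =>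
    intro L hcard hL hforest
    by_cases he : ∃ e ∈ L.faces, e.card = 2
    · obtain ⟨e, heL, hec⟩ := he
      obtain ⟨a, b, hab, habL, hleaf⟩ :=
        exists_leaf (fun σ hσ => hG σ (hL hσ)) hforest heL hec
      set L' : AbsSC V := L.delete a with hL'
      have hL'sub : L'.faces ⊆ L.faces := fun σ hσ => hσ.1
      have hL'forest : AbsSC.IsForest L' := by
        rintro n p ⟨hn, hinj, hedge⟩
        exact hforest n p ⟨hn, hinj, fun i => hL'sub (hedge i)⟩
      have hssub : {σ : Finset V | σ ∈ L'.faces ∧ σ.card = 2} ⊂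
          {σ : Finset V | σ ∈ L.faces ∧ σ.card = 2} := by
        constructor
        · rintro σ ⟨hσ, hc⟩; exact ⟨hL'sub hσ, hc⟩
        · intro hsub
          have hmem : ({a, b} : Finset V) ∈ {σ : Finset V | σ ∈ L.faces ∧ σ.card = 2} :=
            ⟨habL, Finset.card_pair hab⟩
          have := hsub hmem
          exact this.1.2 (Finset.mem_insert_self a _)
      have hlt : {σ : Finset V | σ ∈ L'.faces ∧ σ.card = 2}.ncard <
          {σ : Finset V | σ ∈ L.faces ∧ σ.card = 2}.ncard :=
        Set.ncard_lt_ncard hssub (Set.toFinite _)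
      obtain ⟨v, hv, hcc⟩ := ih L' (by omega) (fun σ hσ => hL (hL'sub hσ)) hL'forest
      refine ⟨v, hv, ?_⟩
      set r : V → V := fun x => if x = a then b else x with hr
      have hbL : ({b} : Finset V) ∈ L.faces :=
        L.down_closed _ habL _
          (Finset.singleton_subset_iff.2 (Finset.mem_insert_of_mem (Finset.mem_singleton_self b)))
          ⟨b, Finset.mem_singleton_self b⟩
      have hrs : AbsSC.IsSimplicial L L' r := by
        intro σ hσ
        by_cases haσ : a ∈ σ
        · have hsub2 : σ.image r ⊆ {b} := by
            intro x hx
            obtain ⟨y, hy, rfl⟩ := Finset.mem_image.1 hx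
            have hyb := hleaf σ hσ haσ hy
            rcases Finset.mem_insert.1 hyb with rfl | hyb
            · simp [hr]
            · rw [Finset.mem_singleton] at hyb; subst hyb
              simp [hr, if_neg (Ne.symm hab)]
          have hne : (σ.image r).Nonempty := (L.nonempty_of_mem σ hσ).image r
          have : σ.image r = {b} := by
            apply Finset.eq_of_subset_of_card_le hsub2
            rw [Finset.card_singleton]
            exact Finset.card_pos.2 hne
          rw [this]
          exact ⟨hbL, fun h => hab (Finset.mem_singleton.1 h)⟩
        · have : σ.image r = σ := by
            apply Finset.image_congr ?_ |>.trans (Finset.image_id)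
            intro x hx
            have : x ≠ a := fun h => haσ (h ▸ hx)
            simp [hr, this]
          rw [this]
          exact ⟨hσ, haσ⟩
      have step1 : AbsSC.Contig L G id r := by
        refine ⟨fun σ hσ => by rw [Finset.image_id]; exact hL hσ, fun σ hσ => hL (hL'sub (hrs σ hσ)),
          fun σ hσ => ?_⟩
        rw [Finset.image_id]
        by_cases haσ : a ∈ σ
        · have hsub2 : σ ∪ σ.image r ⊆ ({a, b} : Finset V) := by
            intro x hx
            rcases Finset.mem_union.1 hx with hx | hx
            · exact hleaf σ hσ haσ hx
            · obtain ⟨y, hy, rfl⟩ := Finset.mem_image.1 hx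
              have hyb := hleaf σ hσ haσ hy
              rcases Finset.mem_insert.1 hyb with rfl | hyb
              · simp [hr]
              · rw [Finset.mem_singleton] at hyb; subst hyb
                have : r y = y := by simp [hr, if_neg (Ne.symm hab)]
                rw [this]
                exact Finset.mem_insert_of_mem (Finset.mem_singleton_self _)
          exact G.down_closed _ (hL habL) _ hsub2
            ((L.nonempty_of_mem σ hσ).mono Finset.subset_union_left)
        · have himg : σ.image r = σ := by
            apply Finset.image_congr ?_ |>.trans (Finset.image_id)
            intro x hx
            have : x ≠ a := fun h => haσ (h ▸ hx)
            simp [hr, this]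
          rw [himg, Finset.union_idempotent]
          exact hL hσ
      have hcomp := contigClass_comp hrs hcc
      have h1 : (id ∘ r) = r := rfl
      have h2 : ((fun _ : V => v) ∘ r) = (fun _ : V => v) := rfl
      rw [h1, h2] at hcomp
      exact Relation.ReflTransGen.head step1 hcomp
    · have hsing : ∀ σ ∈ L.faces, ∃ z, σ = {z} := by
        intro σ hσ
        have h1 : σ.card ≤ 2 := hG σ (hL hσ)
        have h2 : σ.card ≠ 2 := fun h => he ⟨σ, hσ, h⟩
        have h3 : 1 ≤ σ.card := Finset.card_pos.2 (L.nonempty_of_mem σ hσ)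
        exact Finset.card_eq_one.1 (by omega)
      exact singletons_to_const hconn hL hsing

end Aux




/-- a subgraph of a connected graph is categorical iff it is a forest. -/
theorem categorical_iff_forest {V : Type} [DecidableEq V] [Fintype V]
    (G L : AbsSC V) (hG : AbsSC.IsGraph G) (hconn : AbsSC.ConnectedG G)
    (hL : L.faces ⊆ G.faces) :
    AbsSC.Categorical G L ↔ AbsSC.IsForest L := by
  constructor
  · exact fun h => forest_of_categorical_aux G L hG hL h
  · intro hforest
    obtain ⟨v, hv, hcc⟩ := forest_contract hG hconn
      {σ : Finset V | σ ∈ L.faces ∧ σ.card = 2}.ncard L le_rfl hL hforest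
    exact ⟨hL, v, hv, hcc⟩
end
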